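/- arXiv:1901.01356 — 2 statements merged into one kernel-verified Lean document; each statement's English description precedes it below -/
import Mathlib

section
/- Let P be a pmf on a finite set T, ω : T → ℝ, Ω(λ) = -log E_P[exp(-λω(T))], and suppose ρ ≥ sup_{τ∈[0,λ]} Var_{P^τ}[ω(T)] where P^τ is the exponential tilting of P by -τω. Then for every λ ≥ 0, Ω(λ) ≥ λ E_P[ω(T)] - λ²ρ/2. -/
/-!
With `Z τ = E_P[exp (-τ ω)]`, the function `Ω = -log Z` has derivative the mean of `ω` under the
tilted law `P^τ`, and that mean has derivative `-Var_{P^τ}[ω] ≥ -ρ` on `[0, λ]`. The claim is the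
resulting second-order Taylor lower bound for `Ω` at `0`, where `Ω 0 = 0` and `Ω' 0 = E_P[ω]`.
-/

open Real Finset

theorem monotoneOn_Icc_of_hasDerivAt_nonneg {f f' : ℝ → ℝ} {a b : ℝ}
    (hf : ∀ x, HasDerivAt f (f' x) x) (hf' : ∀ x ∈ Set.Icc a b, 0 ≤ f' x) :
    MonotoneOn f (Set.Icc a b) :=
  monotoneOn_of_hasDerivWithinAt_nonneg (convex_Icc a b)
    (HasDerivAt.continuousOn fun x _ => hf x) (fun x _ => (hf x).hasDerivWithinAt)
    fun x hx => hf' x (interior_subset hx)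

theorem add_mul_sub_sq_le_of_neg_le_deriv2 {f f' f'' : ℝ → ℝ} {a b ρ : ℝ} (hab : a ≤ b)
    (hf : ∀ x, HasDerivAt f (f' x) x) (hf' : ∀ x, HasDerivAt f' (f'' x) x)
    (hρ : ∀ x ∈ Set.Icc a b, -ρ ≤ f'' x) :
    f a + (b - a) * f' a - (b - a) ^ 2 * ρ / 2 ≤ f b := by
  have hG : MonotoneOn (fun x => f' x + (x - a) * ρ) (Set.Icc a b) := by
    refine monotoneOn_Icc_of_hasDerivAt_nonneg (f' := fun x => f'' x + ρ) (fun x => ?_)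
      fun x hx => by linarith [hρ x hx]
    simpa using (hf' x).fun_add (((hasDerivAt_id x).sub_const a).mul_const ρ)
  have hg : MonotoneOn (fun x => f x - (x - a) * f' a + (x - a) ^ 2 * ρ / 2) (Set.Icc a b) := by
    refine monotoneOn_Icc_of_hasDerivAt_nonneg
      (f' := fun x => f' x - f' a + (x - a) * ρ) (fun x => ?_) fun x hx => ?_
    · refine (((hf x).fun_sub (((hasDerivAt_id x).sub_const a).mul_const (f' a))).fun_add
        ((((hasDerivAt_id x).sub_const a).pow 2).mul_const ρ |>.div_const 2)).congr_deriv ?_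
      simp only [id_eq, Nat.cast_ofNat, Nat.add_one_sub_one, pow_one]
      ring
    · linarith [hG (Set.left_mem_Icc.2 hab) hx hx.1]
  have := hg (Set.left_mem_Icc.2 hab) (Set.right_mem_Icc.2 hab) hab
  norm_num at this
  linarith

theorem sum_mul_sub_sq_eq_of_sum_eq_one {ι : Type*} (s : Finset ι) {q x : ι → ℝ}
    (hq : ∑ i ∈ s, q i = 1) :
    ∑ i ∈ s, q i * (x i - ∑ j ∈ s, q j * x j) ^ 2 =
      ∑ i ∈ s, q i * x i ^ 2 - (∑ i ∈ s, q i * x i) ^ 2 := by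
  set m := ∑ j ∈ s, q j * x j
  calc ∑ i ∈ s, q i * (x i - m) ^ 2
      = ∑ i ∈ s, (q i * x i ^ 2 - 2 * m * (q i * x i) + m ^ 2 * q i) :=
        sum_congr rfl fun i _ => by ring
    _ = ∑ i ∈ s, q i * x i ^ 2 - 2 * m * m + m ^ 2 * ∑ i ∈ s, q i := by
        rw [sum_add_distrib, sum_sub_distrib, ← mul_sum, ← mul_sum]
    _ = _ := by rw [hq]; ring

theorem hasDerivAt_sum_mul_exp_neg_mul {T : Type*} [Fintype T] (c w : T → ℝ) (τ : ℝ) :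
    HasDerivAt (fun τ => ∑ t, c t * exp (-τ * w t)) (-∑ t, c t * w t * exp (-τ * w t)) τ := by
  refine (HasDerivAt.fun_sum fun t _ =>
    (((hasDerivAt_id τ).neg.mul_const (w t)).exp).const_mul (c t)).congr_deriv ?_
  rw [← sum_neg_distrib]
  exact sum_congr rfl fun t _ => by
    simp only [Pi.neg_apply, id_eq, neg_mul, one_mul, mul_neg, neg_inj]
    ring

section Tilting

variable {T : Type*} [Fintype T] (P w : T → ℝ)

noncomputable def partitionFn (τ : ℝ) : ℝ := ∑ t, P t * exp (-τ * w t)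

noncomputable def tiltedWeight (τ : ℝ) (t : T) : ℝ := P t * exp (-τ * w t) / partitionFn P w τ

noncomputable def tiltedMean (τ : ℝ) : ℝ := ∑ t, tiltedWeight P w τ t * w t

noncomputable def tiltedVariance (τ : ℝ) : ℝ :=
  ∑ t, tiltedWeight P w τ t * (w t - tiltedMean P w τ) ^ 2

variable {P w}

theorem partitionFn_pos (hP : ∀ t, 0 ≤ P t) (hP0 : P ≠ 0) (τ : ℝ) : 0 < partitionFn P w τ := by
  obtain ⟨t₀, ht₀⟩ := Function.ne_iff.1 hP0
  exact sum_pos' (fun t _ => mul_nonneg (hP t) (exp_pos _).le)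
    ⟨t₀, mem_univ t₀, mul_pos ((hP t₀).lt_of_ne' ht₀) (exp_pos _)⟩

theorem tiltedMean_eq_div (τ : ℝ) :
    tiltedMean P w τ = (∑ t, P t * w t * exp (-τ * w t)) / partitionFn P w τ := by
  rw [tiltedMean, sum_div]
  exact sum_congr rfl fun t _ => by rw [tiltedWeight]; ring

theorem tiltedVariance_eq_div_sub_sq {τ : ℝ} (hZ : partitionFn P w τ ≠ 0) :
    tiltedVariance P w τ =
      (∑ t, P t * w t * w t * exp (-τ * w t)) / partitionFn P w τ - tiltedMean P w τ ^ 2 := by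
  have hsum : ∑ t, tiltedWeight P w τ t = 1 := by
    simp only [tiltedWeight, ← sum_div]
    exact div_self hZ
  rw [tiltedVariance, tiltedMean, sum_mul_sub_sq_eq_of_sum_eq_one _ hsum, sum_div]
  congr 1
  exact sum_congr rfl fun t _ => by rw [tiltedWeight]; ring

theorem hasDerivAt_partitionFn (τ : ℝ) :
    HasDerivAt (partitionFn P w) (-∑ t, P t * w t * exp (-τ * w t)) τ :=
  hasDerivAt_sum_mul_exp_neg_mul P w τ

theorem hasDerivAt_neg_log_partitionFn {τ : ℝ} (hZ : partitionFn P w τ ≠ 0) :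
    HasDerivAt (fun τ => -log (partitionFn P w τ)) (tiltedMean P w τ) τ := by
  refine ((hasDerivAt_partitionFn τ).log hZ).neg.congr_deriv ?_
  rw [tiltedMean_eq_div, neg_div, neg_neg]

theorem hasDerivAt_tiltedMean {τ : ℝ} (hZ : partitionFn P w τ ≠ 0) :
    HasDerivAt (tiltedMean P w) (-tiltedVariance P w τ) τ := by
  have hN := hasDerivAt_sum_mul_exp_neg_mul (fun t => P t * w t) w τ
  rw [show tiltedMean P w = _ from funext tiltedMean_eq_div]
  refine (hN.div (hasDerivAt_partitionFn τ) hZ).congr_deriv ?_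
  rw [tiltedVariance_eq_div_sub_sq hZ, tiltedMean_eq_div]
  generalize partitionFn P w τ = Z at hZ ⊢
  generalize ∑ t, P t * w t * exp (-τ * w t) = N
  generalize ∑ t, P t * w t * w t * exp (-τ * w t) = M
  field_simp
  ring

end Tilting

theorem cgf_second_order_lower {T : Type*} [Fintype T] (P : T → ℝ) (hP : ∀ t, 0 ≤ P t)
    (hsum : ∑ t, P t = 1) (w : T → ℝ) (lam ρ : ℝ) (hlam : 0 ≤ lam)
    (hρ : ∀ τ ∈ Set.Icc (0:ℝ) lam,
      (∑ t, (P t * Real.exp (-τ * w t) / ∑ s, P s * Real.exp (-τ * w s)) *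
        (w t - ∑ u, (P u * Real.exp (-τ * w u) / ∑ s, P s * Real.exp (-τ * w s)) * w u) ^ 2)
        ≤ ρ) :
    -Real.log (∑ t, P t * Real.exp (-lam * w t)) ≥
      lam * (∑ t, P t * w t) - lam ^ 2 * ρ / 2 := by
  have hZ τ : partitionFn P w τ ≠ 0 :=
    (partitionFn_pos hP (by rintro rfl; simp at hsum) τ).ne'
  have hZ0 : partitionFn P w 0 = 1 := by simp [partitionFn, hsum]
  have hmean0 : tiltedMean P w 0 = ∑ t, P t * w t := by
    simp [tiltedMean_eq_div, hZ0]
  have hvar : ∀ τ ∈ Set.Icc 0 lam, tiltedVariance P w τ ≤ ρ := hρ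
  have := add_mul_sub_sq_le_of_neg_le_deriv2 hlam (fun τ => hasDerivAt_neg_log_partitionFn (hZ τ))
    (fun τ => hasDerivAt_tiltedMean (hZ τ)) fun τ hτ => neg_le_neg (hvar τ hτ)
  simp only [hZ0, log_one, neg_zero, zero_add, sub_zero, hmean0] at this
  exact this
end

section
/- Let X be a finite set, P a pmf on X, and for each s in a finite set S of size M let P(·|s) be a conditional pmf on X with P(x) = Σ_s P(s)P(x|s) for some pmf on S, and let f : X → S be a deterministic map. If M ≤ exp(nR), then Σ_x P(x) 1{P(x|f(x)) ≥ exp(n(R+η)) P(x)} ≤ exp(-nη). -/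
open Real Finset
open scoped Classical

/-! On the event in question `p x ≤ e^{-n(R+η)} P(x | f x)` (Markov), and `∑ₓ P(x | f x) ≤ M`
because each `x` is counted only in the conditional pmf of its own codeword `f x`. -/

section

variable {ι 𝕜 : Type*} [Fintype ι] [Field 𝕜] [LinearOrder 𝕜] [IsStrictOrderedRing 𝕜]

theorem sum_filter_mul_le_le_inv_mul_sum {p g : ι → 𝕜} {c : 𝕜} (hc : 0 < c) (hg : ∀ x, 0 ≤ g x) :
    ∑ x ∈ univ.filter (fun x => c * p x ≤ g x), p x ≤ c⁻¹ * ∑ x, g x := by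
  rw [mul_sum]
  calc ∑ x ∈ univ.filter (fun x => c * p x ≤ g x), p x
      ≤ ∑ x ∈ univ.filter (fun x => c * p x ≤ g x), c⁻¹ * g x :=
        sum_le_sum fun x hx => by
          rw [inv_mul_eq_div, le_div_iff₀ hc, mul_comm]
          exact (mem_filter.1 hx).2
    _ ≤ ∑ x, c⁻¹ * g x :=
        sum_le_sum_of_subset_of_nonneg (filter_subset _ _)
          fun x _ _ => mul_nonneg (inv_nonneg.2 hc.le) (hg x)

theorem sum_apply_self_le_card {σ : Type*} [Fintype σ] {q : σ → ι → 𝕜}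
    (hq : ∀ s x, 0 ≤ q s x) (hq1 : ∀ s, ∑ x, q s x ≤ 1) (f : ι → σ) :
    ∑ x, q (f x) x ≤ Fintype.card σ := by
  rw [← sum_fiberwise univ f fun x => q (f x) x]
  calc ∑ s, ∑ x ∈ univ.filter (fun x => f x = s), q (f x) x
      = ∑ s, ∑ x ∈ univ.filter (fun x => f x = s), q s x :=
        sum_congr rfl fun s _ => sum_congr rfl fun x hx => by rw [(mem_filter.1 hx).2]
    _ ≤ ∑ _s : σ, (1 : 𝕜) :=
        sum_le_sum fun s _ => (sum_le_sum_of_subset_of_nonneg (filter_subset _ _)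
          fun x _ _ => hq s x).trans (hq1 s)
    _ = Fintype.card σ := by simp

end

theorem rate_spectrum_bound_general {X S : Type*} [Fintype X] [Fintype S] (M n : ℕ)
    (hM : Fintype.card S = M) (cond : S → X → ℝ) (p : X → ℝ)
    (hcond : ∀ s, (∀ x, 0 ≤ cond s x) ∧ ∑ x, cond s x = 1)
    (f : X → S) (R η : ℝ) (hR : (M:ℝ) ≤ Real.exp ((n:ℝ) * R)) :
    ∑ x ∈ Finset.univ.filter (fun x => Real.exp ((n:ℝ) * (R + η)) * p x ≤ cond (f x) x), p x
      ≤ Real.exp (-(n:ℝ) * η) := by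
  have hcard : ∑ x, cond (f x) x ≤ M :=
    hM ▸ sum_apply_self_le_card (fun s => (hcond s).1) (fun s => (hcond s).2.le) f
  calc _ ≤ (exp (n * (R + η)))⁻¹ * ∑ x, cond (f x) x :=
        sum_filter_mul_le_le_inv_mul_sum (exp_pos _) fun x => (hcond (f x)).1 x
    _ ≤ (exp (n * (R + η)))⁻¹ * exp (n * R) := by gcongr; exact hcard.trans hR
    _ = exp (-n * η) := by rw [← exp_neg, ← exp_add]; ring_nf

theorem rate_spectrum_bound {X S : Type*} [Fintype X] [Fintype S] (M n : ℕ)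
    (hM : Fintype.card S = M) (pS : S → ℝ) (cond : S → X → ℝ) (p : X → ℝ)
    (hpS : ∀ s, 0 ≤ pS s) (hpS1 : ∑ s, pS s = 1)
    (hcond : ∀ s, (∀ x, 0 ≤ cond s x) ∧ ∑ x, cond s x = 1)
    (hmix : ∀ x, p x = ∑ s, pS s * cond s x)
    (f : X → S) (R η : ℝ) (hR : (M:ℝ) ≤ Real.exp ((n:ℝ) * R)) :
    ∑ x ∈ Finset.univ.filter (fun x => Real.exp ((n:ℝ) * (R + η)) * p x ≤ cond (f x) x), p x
      ≤ Real.exp (-(n:ℝ) * η) :=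
  rate_spectrum_bound_general M n hM cond p hcond f R η hR
end
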